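/- arXiv:1309.2264 — 3 statements merged into one kernel-verified Lean document; each statement's English description precedes it below -/
import Mathlib

section
/- Let (R, m) be a Noetherian local ring and h: M → M' a morphism between finite free R-modules. If the induced map h ⊗ id_{R/m} : M ⊗_R R/m → M' ⊗_R R/m is injective, then h is injective and the cokernel of h is a free R-module. -/
/-- Let `(R, m)` be a Noetherian local ring and `h : M → M'` a morphism between finite free
`R`-modules. If `h ⊗ id_{R/m}` is injective, then `h` is injective and `coker h` is free. -/
theorem free_hom_injective_of_baseChange_residue_injective
    {R : Type*} [CommRing R] [IsNoetherianRing R] [IsLocalRing R]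
    {M M' : Type*} [AddCommGroup M] [Module R M] [AddCommGroup M'] [Module R M']
    [Module.Finite R M] [Module.Free R M] [Module.Finite R M'] [Module.Free R M']
    (h : M →ₗ[R] M')
    (hb : Function.Injective
      (LinearMap.baseChange (R ⧸ IsLocalRing.maximalIdeal R) h)) :
    Function.Injective h ∧ Module.Free R (M' ⧸ LinearMap.range h) := by
  have hl : Function.Injective (h.lTensor (IsLocalRing.ResidueField R)) := by
    rw [← LinearMap.baseChange_eq_ltensor]
    exact hb
  constructor
  · obtain ⟨l', hl'⟩ :=
      (IsLocalRing.split_injective_iff_lTensor_residueField_injective h).mpr hl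
    exact Function.HasLeftInverse.injective ⟨l', LinearMap.congr_fun hl'⟩
  · exact Module.free_of_lTensor_residueField_injective h (LinearMap.range h).mkQ
      (Submodule.mkQ_surjective _) h.exact_map_mkQ_range hl
end

section
/- Let R be a commutative ring, M an n×m matrix, and N an n'×m' matrix over R. Then for the block diagonal matrix M ⊕ N, the determinantal ideal satisfies I_k(M ⊕ N) = ∑_{i+j=k} I_i(M) · I_j(N). -/
/-!
A `k`-minor of `M ⊕ N` takes each of its rows and columns from the `M`-block or the `N`-block.
Sorting rows and columns by block turns it into a block diagonal matrix `A ⊕ B` with rectangular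
blocks, `A` a submatrix of `M` and `B` one of `N`. If `A` is square the minor is `± det A · det B`;
otherwise one of the two zero blocks is so large that every term of the Leibniz expansion meets
it, and the minor vanishes. Conversely `det A · det B` is itself a minor of `M ⊕ N`.
-/

/-- The determinantal ideal `I_k(M)` generated by all `k × k` minors of a matrix `M`
(with the convention `I_0 = R`). -/
def detIdeal {R : Type*} [CommRing R] {ι κ : Type*} (k : ℕ) (M : Matrix ι κ R) : Ideal R :=
  Ideal.span {x | ∃ (f : Fin k → ι) (g : Fin k → κ), x = ((M.submatrix f g).det)}

open Function Finset Equiv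

theorem Sum.map_getLeft_getRight_comp_sumCompl_symm {α β γ : Type*} (f : α → β ⊕ γ) :
    Sum.map (fun a : {a // (f a).isLeft} => (f a).getLeft a.2)
        (fun a : {a // ¬(f a).isLeft} => (f a).getRight (Sum.not_isLeft.1 a.2)) ∘
      (Equiv.sumCompl fun a => (f a).isLeft).symm = f := by
  funext a
  by_cases h : (f a).isLeft <;> simp [Equiv.sumCompl, h]

namespace Matrix

theorem fromBlocks_zero_submatrix_sum_map {S ι₁ ι₂ κ₁ κ₂ α₁ α₂ β₁ β₂ : Type*} [Zero S]
    (A : Matrix ι₁ κ₁ S) (B : Matrix ι₂ κ₂ S)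
    (f₁ : α₁ → ι₁) (f₂ : α₂ → ι₂) (g₁ : β₁ → κ₁) (g₂ : β₂ → κ₂) :
    (fromBlocks A 0 0 B).submatrix (Sum.map f₁ f₂) (Sum.map g₁ g₂) =
      fromBlocks (A.submatrix f₁ g₁) 0 0 (B.submatrix f₂ g₂) := by
  ext (i | i) (j | j) <;> rfl

variable {R : Type*} [CommRing R] {n ι κ α β α₁ α₂ β₁ β₂ : Type*}

/-- The easy half of the Frobenius–König theorem. -/
theorem det_eq_zero_of_apply_eq_zero [Fintype n] [DecidableEq n] [Fintype α] [Fintype β]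
    (X : Matrix n n R) {u : α → n} {v : β → n} (hu : Injective u) (hv : Injective v)
    (hcard : Fintype.card n < Fintype.card α + Fintype.card β)
    (hzero : ∀ a b, X (u a) (v b) = 0) : X.det = 0 := by
  classical
  refine (det_apply X).trans (sum_eq_zero fun σ _ => ?_)
  obtain ⟨_, hx⟩ := inter_nonempty_of_card_lt_card_add_card (subset_univ (univ.image u))
    (subset_univ (univ.image fun b => σ (v b))) (by
      rwa [card_image_of_injective _ hu,
        card_image_of_injective (f := fun b => σ (v b)) _ (σ.injective.comp hv),
        card_univ, card_univ, card_univ])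
  obtain ⟨⟨a, -, rfl⟩, ⟨b, -, hb⟩⟩ := by simpa only [mem_inter, mem_image] using hx
  rw [prod_eq_zero (mem_univ (v b)) (by rw [hb, hzero]), smul_zero]

theorem det_submatrix_equiv_equiv [Fintype n] [DecidableEq n] [Fintype α] [DecidableEq α]
    (X : Matrix n n R) (e₁ e₂ : α ≃ n) :
    (X.submatrix e₁ e₂).det = Perm.sign (e₁.symm.trans e₂) * X.det := by
  rw [← det_permute', ← det_submatrix_equiv_self e₁ (X.submatrix id _)]
  congr 1
  ext i j
  simp

theorem det_submatrix_mem_detIdeal [Fintype α] [DecidableEq α] (M : Matrix ι κ R)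
    (f : α → ι) (g : α → κ) : (M.submatrix f g).det ∈ detIdeal (Fintype.card α) M :=
  let e := (Fintype.equivFin α).symm
  Ideal.subset_span ⟨f ∘ e, g ∘ e, (det_submatrix_equiv_self e _).symm⟩

theorem detIdeal_submatrix_le (k : ℕ) (M : Matrix ι κ R) (f : α → ι) (g : β → κ) :
    detIdeal k (M.submatrix f g) ≤ detIdeal k M :=
  Ideal.span_mono fun _ ⟨f', g', hx⟩ => ⟨f ∘ f', g ∘ g', hx⟩

variable [Fintype n] [DecidableEq n] [Fintype α₁] [Fintype α₂] [Fintype β₁] [Fintype β₂]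

theorem det_submatrix_fromBlocks_eq_zero_of_card_ne (A : Matrix α₁ β₁ R) (B : Matrix α₂ β₂ R)
    (e₁ : n ≃ α₁ ⊕ α₂) (e₂ : n ≃ β₁ ⊕ β₂) (h : Fintype.card α₁ ≠ Fintype.card β₁) :
    ((fromBlocks A 0 0 B).submatrix e₁ e₂).det = 0 := by
  have hα := Fintype.card_congr e₁
  have hβ := Fintype.card_congr e₂
  rw [Fintype.card_sum] at hα hβ
  rcases h.lt_or_gt with h | h
  · exact det_eq_zero_of_apply_eq_zero _ (e₁.symm.injective.comp Sum.inr_injective)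
      (e₂.symm.injective.comp Sum.inl_injective) (by omega) fun _ _ => by simp
  · exact det_eq_zero_of_apply_eq_zero _ (e₁.symm.injective.comp Sum.inl_injective)
      (e₂.symm.injective.comp Sum.inr_injective) (by omega) fun _ _ => by simp

theorem det_submatrix_fromBlocks_mem_of_card_eq (A : Matrix α₁ β₁ R) (B : Matrix α₂ β₂ R)
    (e₁ : n ≃ α₁ ⊕ α₂) (e₂ : n ≃ β₁ ⊕ β₂) (h : Fintype.card α₁ = Fintype.card β₁) :
    ((fromBlocks A 0 0 B).submatrix e₁ e₂).det ∈
      detIdeal (Fintype.card α₁) A * detIdeal (Fintype.card α₂) B := by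
  classical
  have hα := Fintype.card_congr e₁
  have hβ := Fintype.card_congr e₂
  rw [Fintype.card_sum] at hα hβ
  let eL : α₁ ≃ β₁ := Fintype.equivOfCardEq h
  let eR : α₂ ≃ β₂ := Fintype.equivOfCardEq (by omega)
  let σ : Perm n := e₁.trans ((sumCongr eL eR).trans e₂.symm)
  have hblock : ((fromBlocks A 0 0 B).submatrix e₁ e₂).submatrix e₁.symm
      ((sumCongr eL eR).trans e₂.symm) =
        fromBlocks (A.submatrix id eL) 0 0 (B.submatrix id eR) := by
    rw [← fromBlocks_zero_submatrix_sum_map, Sum.map_id_id]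
    ext i j
    simp [sumCongr]
  have hsign := det_submatrix_equiv_equiv ((fromBlocks A 0 0 B).submatrix e₁ e₂) e₁.symm
    ((sumCongr eL eR).trans e₂.symm)
  rw [hblock, det_fromBlocks_zero₂₁, symm_symm] at hsign
  have hunit : IsUnit ((Perm.sign σ : ℤ) : R) := (Perm.sign σ).isUnit.map (Int.castRingHom R)
  rw [← Ideal.unit_mul_mem_iff_mem _ hunit, ← hsign]
  exact Ideal.mul_mem_mul (det_submatrix_mem_detIdeal _ _ _) (det_submatrix_mem_detIdeal _ _ _)

theorem det_submatrix_fromBlocks_mem (A : Matrix α₁ β₁ R) (B : Matrix α₂ β₂ R)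
    (e₁ : n ≃ α₁ ⊕ α₂) (e₂ : n ≃ β₁ ⊕ β₂) :
    ((fromBlocks A 0 0 B).submatrix e₁ e₂).det ∈
      detIdeal (Fintype.card α₁) A * detIdeal (Fintype.card α₂) B := by
  by_cases h : Fintype.card α₁ = Fintype.card β₁
  · exact det_submatrix_fromBlocks_mem_of_card_eq A B e₁ e₂ h
  · rw [det_submatrix_fromBlocks_eq_zero_of_card_ne A B e₁ e₂ h]
    exact zero_mem _

end Matrix

section BlockDiagonal

open Matrix

variable {R : Type*} [CommRing R] {ι₁ κ₁ ι₂ κ₂ : Type*}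

theorem detIdeal_mul_detIdeal_le_detIdeal_fromBlocks (i j : ℕ) (M : Matrix ι₁ κ₁ R)
    (N : Matrix ι₂ κ₂ R) :
    detIdeal i M * detIdeal j N ≤ detIdeal (i + j) (fromBlocks M 0 0 N) := by
  rw [detIdeal, detIdeal, Ideal.span_mul_span', Ideal.span_le]
  rintro _ ⟨_, ⟨f₁, g₁, rfl⟩, _, ⟨f₂, g₂, rfl⟩, rfl⟩
  have := det_submatrix_mem_detIdeal (fromBlocks M 0 0 N) (Sum.map f₁ f₂) (Sum.map g₁ g₂)
  rwa [fromBlocks_zero_submatrix_sum_map, det_fromBlocks_zero₂₁, Fintype.card_sum,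
    Fintype.card_fin, Fintype.card_fin] at this

theorem det_submatrix_fromBlocks_mem_sup {n : Type*} [Fintype n] [DecidableEq n]
    (M : Matrix ι₁ κ₁ R) (N : Matrix ι₂ κ₂ R) (f : n → ι₁ ⊕ ι₂) (g : n → κ₁ ⊕ κ₂) :
    ((fromBlocks M 0 0 N).submatrix f g).det ∈
      (antidiagonal (Fintype.card n)).sup fun ij => detIdeal ij.1 M * detIdeal ij.2 N := by
  classical
  rw [← Sum.map_getLeft_getRight_comp_sumCompl_symm f,
    ← Sum.map_getLeft_getRight_comp_sumCompl_symm g, ← submatrix_submatrix,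
    fromBlocks_zero_submatrix_sum_map]
  set p : n → Prop := fun a => (f a).isLeft
  have hcard : Fintype.card {a // p a} + Fintype.card {a // ¬p a} = Fintype.card n := by
    rw [← Fintype.card_sum, Fintype.card_congr (sumCompl p)]
  refine le_sup (f := fun ij : ℕ × ℕ => detIdeal ij.1 M * detIdeal ij.2 N)
    (HasAntidiagonal.mem_antidiagonal (a := (_, _)).2 hcard) ?_
  exact Ideal.mul_mono (detIdeal_submatrix_le _ _ _ _) (detIdeal_submatrix_le _ _ _ _)
    (det_submatrix_fromBlocks_mem _ _ _ _)

end BlockDiagonal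

/-- For a block diagonal matrix, `I_k(M ⊕ N) = ∑_{i+j=k} I_i(M) · I_j(N)`. -/
theorem detIdeal_blockDiagonal {R : Type*} [CommRing R] {ι₁ κ₁ ι₂ κ₂ : Type*} (k : ℕ)
    (M : Matrix ι₁ κ₁ R) (N : Matrix ι₂ κ₂ R) :
    detIdeal k (Matrix.fromBlocks M 0 0 N) =
      ∑ i ∈ Finset.range (k + 1), detIdeal i M * detIdeal (k - i) N := by
  rw [← Nat.sum_antidiagonal_eq_sum_range_succ fun i j => detIdeal i M * detIdeal j N,
    Ideal.sum_eq_sup]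
  refine le_antisymm ?_ (Finset.sup_le fun ij hij => ?_)
  · rw [detIdeal, Ideal.span_le]
    rintro _ ⟨f, g, rfl⟩
    simpa only [Fintype.card_fin, SetLike.mem_coe] using
      det_submatrix_fromBlocks_mem_sup M N f g
  · rw [← HasAntidiagonal.mem_antidiagonal.1 hij]
    exact detIdeal_mul_detIdeal_le_detIdeal_fromBlocks _ _ M N
end

section
/- Let (R,m) be a Noetherian local ring and let g: F• → F'• be a morphism between bounded-above minimal complexes of finitely generated free R-modules (minimal meaning all differentials have entries in m). If g ⊗ id_{R/m} induces an isomorphism on cohomology in degrees ≤ q and a monomorphism in degree q+1, then g^i: F^i → F'^i is an isomorphism for i ≤ q, and g^{q+1} is a split injection. -/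
/-!
Minimality makes the differentials of `F ⊗ k` and `F' ⊗ k` vanish (`k = R/m`), so the
map induced by `g ⊗ k` on cohomology in degree `i` is `g^i ⊗ k` itself. The conclusion is then a
degreewise statement about a map `M → N` of finite modules with `N` free over a local ring: it is
a split injection once it is injective modulo `m`, and surjective (Nakayama) once it is surjective
modulo `m`.
-/

open CategoryTheory TensorProduct

/-- The cohomology jump ideal `J^i_k(F•) = I_{rank(F^i)−k+1}(d^{i−1} ⊕ d^i)` computed from a
complex `F•` of finitely generated free `R`-modules, where `d^{i−1} ⊕ d^i` is the block
diagonal matrix of the two differentials with respect to chosen bases. -/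
noncomputable def jumpIdeal (R : Type*) [CommRing R]
    (F : CochainComplex (ModuleCat R) ℤ)
    [∀ j, Module.Finite R (F.X j)] [∀ j, Module.Free R (F.X j)]
    (i : ℤ) (k : ℕ) : Ideal R :=
  letI := Classical.decEq (Module.Free.ChooseBasisIndex R (F.X (i - 1)))
  letI := Classical.decEq (Module.Free.ChooseBasisIndex R (F.X i))
  detIdeal (Module.finrank R (F.X i) + 1 - k)
    (Matrix.fromBlocks
      (LinearMap.toMatrix (Module.Free.chooseBasis R (F.X (i - 1)))
        (Module.Free.chooseBasis R (F.X i)) (F.d (i - 1) i).hom)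
      0 0
      (LinearMap.toMatrix (Module.Free.chooseBasis R (F.X i))
        (Module.Free.chooseBasis R (F.X (i + 1))) (F.d i (i + 1)).hom))

/-- The base change `E• ⊗_R S` of a cochain complex of `R`-modules along `R → S`. -/
noncomputable def baseChangeComplex (R S : Type*) [CommRing R] [CommRing S] [Algebra R S]
    (E : CochainComplex (ModuleCat R) ℤ) : CochainComplex (ModuleCat S) ℤ where
  X i := ModuleCat.of S (S ⊗[R] E.X i)
  d i j := ModuleCat.ofHom (LinearMap.baseChange S (E.d i j).hom)
  shape i j h := by
    have h0 : ((E.d i j).hom : E.X i →ₗ[R] E.X j) = 0 := by rw [E.shape i j h]; rfl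
    show ModuleCat.ofHom (LinearMap.baseChange S (E.d i j).hom) = 0
    rw [h0, LinearMap.baseChange_zero]; rfl
  d_comp_d' i j k _ _ := by
    show ModuleCat.ofHom (LinearMap.baseChange S (E.d i j).hom) ≫
      ModuleCat.ofHom (LinearMap.baseChange S (E.d j k).hom) = 0
    rw [← ModuleCat.ofHom_comp, ← LinearMap.baseChange_comp]
    have h0 : ((E.d j k).hom : E.X j →ₗ[R] E.X k).comp (E.d i j).hom = 0 := by
      rw [← ModuleCat.hom_comp, E.d_comp_d i j k]; rfl
    rw [h0, LinearMap.baseChange_zero]; rfl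

/-- The base change of a morphism of cochain complexes along `R → S`. -/
noncomputable def baseChangeMap (R S : Type*) [CommRing R] [CommRing S] [Algebra R S]
    {F F' : CochainComplex (ModuleCat R) ℤ} (g : F ⟶ F') :
    baseChangeComplex R S F ⟶ baseChangeComplex R S F' where
  f i := ModuleCat.ofHom (LinearMap.baseChange S (g.f i).hom)
  comm' i j _ := by
    show ModuleCat.ofHom (LinearMap.baseChange S (g.f i).hom) ≫
        ModuleCat.ofHom (LinearMap.baseChange S (F'.d i j).hom) =
      ModuleCat.ofHom (LinearMap.baseChange S (F.d i j).hom) ≫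
        ModuleCat.ofHom (LinearMap.baseChange S (g.f j).hom)
    rw [← ModuleCat.ofHom_comp, ← ModuleCat.ofHom_comp, ← LinearMap.baseChange_comp,
      ← LinearMap.baseChange_comp, ← ModuleCat.hom_comp, ← ModuleCat.hom_comp, g.comm i j]

namespace LinearMap

section Ring

variable {R M N : Type*} [Ring R] [AddCommGroup M] [Module R M] [AddCommGroup N] [Module R N]

lemma isCompl_range_ker_of_comp_eq_id {f : M →ₗ[R] N} {l : N →ₗ[R] M} (h : l ∘ₗ f = id) :
    IsCompl (range f) (ker l) := by
  have hidem : IsIdempotentElem (f ∘ₗ l) := by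
    change f ∘ₗ (l ∘ₗ f) ∘ₗ l = f ∘ₗ l
    rw [h, id_comp]
  rw [← range_comp_of_range_eq_top f (range_eq_top.mpr (surjective_of_comp_eq_id f l h)),
    ← ker_comp_of_ker_eq_bot l (ker_eq_bot_of_injective (injective_of_comp_eq_id f l h))]
  exact IsIdempotentElem.isCompl hidem

end Ring

variable {R M N : Type*} [CommRing R] [AddCommGroup M] [Module R M] [AddCommGroup N] [Module R N]

lemma baseChange_quotient_eq_zero_of_range_le_smul {I : Ideal R} {f : M →ₗ[R] N}
    (hf : range f ≤ I • (⊤ : Submodule R N)) : f.baseChange (R ⧸ I) = 0 := by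
  have h_one_tmul (y : N) (hy : y ∈ I • (⊤ : Submodule R N)) : (1 : R ⧸ I) ⊗ₜ[R] y = 0 := by
    rw [← quotTensorEquivQuotSMul_symm_mk, (Submodule.Quotient.mk_eq_zero _).mpr hy, map_zero]
  refine AlgebraTensorModule.ext fun a m ↦ ?_
  rw [baseChange_tmul, zero_apply, ← mul_one a, ← smul_eq_mul, ← smul_tmul',
    h_one_tmul _ (hf (mem_range_self f m)), smul_zero]

end LinearMap

namespace IsLocalRing

variable {R M N : Type*} [CommRing R] [IsLocalRing R] [AddCommGroup M] [Module R M]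
  [AddCommGroup N] [Module R N] [Module.Finite R N]

lemma surjective_of_baseChange_residueField_surjective {f : M →ₗ[R] N}
    (hf : Function.Surjective (f.baseChange (ResidueField R))) : Function.Surjective f := by
  rw [← LinearMap.range_eq_top, ← map_tensorProduct_mk_eq_top, ← LinearMap.range_comp,
    LinearMap.range_eq_top]
  exact hf.comp (TensorProduct.mk_surjective R M _ Ideal.Quotient.mk_surjective)

lemma bijective_of_baseChange_residueField_bijective [Module.Finite R M] [Module.Free R N]
    {f : M →ₗ[R] N} (hf : Function.Bijective (f.baseChange (ResidueField R))) :
    Function.Bijective f := by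
  obtain ⟨l, hl⟩ := (split_injective_iff_lTensor_residueField_injective f).mpr hf.injective
  exact ⟨LinearMap.injective_of_comp_eq_id f l hl,
    surjective_of_baseChange_residueField_surjective hf.surjective⟩

end IsLocalRing

namespace HomologicalComplex

variable {C ι : Type*} [Category C] [Limits.HasZeroMorphisms C] {c : ComplexShape ι}
  {K L : HomologicalComplex C c} (φ : K ⟶ L) (i : ι) [K.HasHomology i] [L.HasHomology i]

lemma homologyMap_arrowIso_of_d_eq_zero (hK : ∀ j k, K.d j k = 0) (hL : ∀ j k, L.d j k = 0) :
    Nonempty (Arrow.mk (homologyMap φ i) ≅ Arrow.mk (φ.f i)) := by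
  let eK : K.homology i ≅ K.X i :=
    (ShortComplex.LeftHomologyData.ofZeros (K.sc i) (hK _ _) (hK _ _)).homologyIso
  let eL : L.homology i ≅ L.X i :=
    (ShortComplex.LeftHomologyData.ofZeros (L.sc i) (hL _ _) (hL _ _)).homologyIso
  have h : homologyMap φ i = eK.hom ≫ φ.f i ≫ eL.inv :=
    (ShortComplex.LeftHomologyMapData.ofZeros ((shortComplexFunctor C c i).map φ)
      (hK _ _) (hK _ _) (hL _ _) (hL _ _)).homologyMap_eq
  exact ⟨Arrow.isoMk eK eL (by simp [h])⟩

end HomologicalComplex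

lemma baseChangeComplex_d_eq_zero_of_range_le_smul {R : Type*} [CommRing R] {I : Ideal R}
    {F : CochainComplex (ModuleCat R) ℤ}
    (hmin : ∀ j, LinearMap.range (F.d j (j + 1)).hom ≤ I • (⊤ : Submodule R (F.X (j + 1))))
    (i j : ℤ) : (baseChangeComplex R (R ⧸ I) F).d i j = 0 := by
  by_cases h : i + 1 = j
  · subst h
    exact ModuleCat.hom_ext (LinearMap.baseChange_quotient_eq_zero_of_range_le_smul (hmin i))
  · exact (baseChangeComplex R _ F).shape i j h

theorem minimal_complex_morphism_iso_of_residue_equivalence_general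
    {R : Type} [CommRing R] [IsLocalRing R]
    (F F' : CochainComplex (ModuleCat R) ℤ)
    [∀ j, Module.Finite R (F.X j)]
    [∀ j, Module.Finite R (F'.X j)] [∀ j, Module.Free R (F'.X j)]
    (hminF : ∀ j, LinearMap.range ((F.d j (j + 1)).hom : F.X j →ₗ[R] F.X (j + 1)) ≤
      (IsLocalRing.maximalIdeal R) • (⊤ : Submodule R (F.X (j + 1))))
    (hminF' : ∀ j, LinearMap.range ((F'.d j (j + 1)).hom : F'.X j →ₗ[R] F'.X (j + 1)) ≤
      (IsLocalRing.maximalIdeal R) • (⊤ : Submodule R (F'.X (j + 1))))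
    (g : F ⟶ F') (q : ℤ)
    (hiso : ∀ i ≤ q, CategoryTheory.IsIso (HomologicalComplex.homologyMap
      (baseChangeMap R (R ⧸ IsLocalRing.maximalIdeal R) g) i))
    (hmono : CategoryTheory.Mono (HomologicalComplex.homologyMap
      (baseChangeMap R (R ⧸ IsLocalRing.maximalIdeal R) g) (q + 1))) :
    (∀ i ≤ q, Function.Bijective (g.f i)) ∧
      Function.Injective (g.f (q + 1)) ∧
        ∃ N : Submodule R (F'.X (q + 1)),
          IsCompl (LinearMap.range ((g.f (q + 1)).hom : F.X (q + 1) →ₗ[R] F'.X (q + 1))) N := by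
  have hK := baseChangeComplex_d_eq_zero_of_range_le_smul hminF
  have hL := baseChangeComplex_d_eq_zero_of_range_le_smul hminF'
  have residue_f_iff (P : MorphismProperty (ModuleCat (R ⧸ IsLocalRing.maximalIdeal R)))
      [P.RespectsIso] (i : ℤ) :
      P (HomologicalComplex.homologyMap (baseChangeMap R _ g) i) ↔ P ((baseChangeMap R _ g).f i) :=
    P.arrow_mk_iso_iff (HomologicalComplex.homologyMap_arrowIso_of_d_eq_zero _ i hK hL).some
  have hbij (i : ℤ) (hi : i ≤ q) :
      Function.Bijective ((g.f i).hom.baseChange (IsLocalRing.ResidueField R)) :=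
    (ConcreteCategory.isIso_iff_bijective _).mp
      ((residue_f_iff (.isomorphisms _) i).mp (hiso i hi))
  have hinj : Function.Injective ((g.f (q + 1)).hom.lTensor (IsLocalRing.ResidueField R)) :=
    (ModuleCat.mono_iff_injective _).mp ((residue_f_iff (.monomorphisms _) (q + 1)).mp hmono)
  obtain ⟨l, hl⟩ := (IsLocalRing.split_injective_iff_lTensor_residueField_injective _).mpr hinj
  exact ⟨fun i hi ↦ IsLocalRing.bijective_of_baseChange_residueField_bijective (hbij i hi),
    LinearMap.injective_of_comp_eq_id _ l hl, _, LinearMap.isCompl_range_ker_of_comp_eq_id hl⟩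

/-- Let `(R,m)` be a Noetherian local ring and `g : F• → F'•` a morphism between bounded-above
minimal complexes of finitely generated free `R`-modules (minimal: the differentials have image
in `m · F^{j+1}`). If `g ⊗ id_{R/m}` induces an isomorphism on cohomology in degrees `≤ q` and a
monomorphism in degree `q+1`, then `g^i` is an isomorphism for `i ≤ q` and `g^{q+1}` is a split
injection. -/
theorem minimal_complex_morphism_iso_of_residue_equivalence
    {R : Type} [CommRing R] [IsNoetherianRing R] [IsLocalRing R]
    (F F' : CochainComplex (ModuleCat R) ℤ)
    [∀ j, Module.Finite R (F.X j)] [∀ j, Module.Free R (F.X j)]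
    [∀ j, Module.Finite R (F'.X j)] [∀ j, Module.Free R (F'.X j)]
    (hF : ∃ N : ℤ, ∀ j > N, Subsingleton (F.X j))
    (hF' : ∃ N : ℤ, ∀ j > N, Subsingleton (F'.X j))
    (hminF : ∀ j, LinearMap.range ((F.d j (j + 1)).hom : F.X j →ₗ[R] F.X (j + 1)) ≤
      (IsLocalRing.maximalIdeal R) • (⊤ : Submodule R (F.X (j + 1))))
    (hminF' : ∀ j, LinearMap.range ((F'.d j (j + 1)).hom : F'.X j →ₗ[R] F'.X (j + 1)) ≤
      (IsLocalRing.maximalIdeal R) • (⊤ : Submodule R (F'.X (j + 1))))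
    (g : F ⟶ F') (q : ℤ)
    (hiso : ∀ i ≤ q, CategoryTheory.IsIso (HomologicalComplex.homologyMap
      (baseChangeMap R (R ⧸ IsLocalRing.maximalIdeal R) g) i))
    (hmono : CategoryTheory.Mono (HomologicalComplex.homologyMap
      (baseChangeMap R (R ⧸ IsLocalRing.maximalIdeal R) g) (q + 1))) :
    (∀ i ≤ q, Function.Bijective (g.f i)) ∧
      Function.Injective (g.f (q + 1)) ∧
        ∃ N : Submodule R (F'.X (q + 1)),
          IsCompl (LinearMap.range ((g.f (q + 1)).hom : F.X (q + 1) →ₗ[R] F'.X (q + 1))) N :=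
  minimal_complex_morphism_iso_of_residue_equivalence_general F F' hminF hminF' g q hiso hmono
end
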